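/- arXiv:1011.0277 — 3 statements merged into one kernel-verified Lean document; each statement's English description precedes it below -/
import Mathlib

section
/- Let [X,Y] denote the Lie bracket of smooth vector fields X, Y : ℝ^{2+ρ} → ℝ^{2+ρ}, defined by [X,Y](p) = DY(p)·X(p) − DX(p)·Y(p). Then the Lie bracket of the vector fields D̂ₜ and D̂ₓ on ℝ^{2+ρ} has all components equal to zero except the v^{ρ−1}-component, which equals D̂ₜη̌ − D̂ₓ^ρĤ; that is, [D̂ₜ, D̂ₓ] = (D̂ₜη̌ − D̂ₓ^ρĤ)·∂_{v^{ρ−1}}. -/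
noncomputable section

/-- Partial derivative with respect to `t`. -/
def pT (ρ : ℕ) (g : ℝ × ℝ × (Fin ρ → ℝ) → ℝ) (p : ℝ × ℝ × (Fin ρ → ℝ)) : ℝ :=
  deriv (fun s => g (s, p.2)) p.1

/-- Partial derivative with respect to `x`. -/
def pX (ρ : ℕ) (g : ℝ × ℝ × (Fin ρ → ℝ) → ℝ) (p : ℝ × ℝ × (Fin ρ → ℝ)) : ℝ :=
  deriv (fun s => g (p.1, s, p.2.2)) p.2.1

/-- Partial derivative with respect to the coordinate `v^a`. -/
def pV (ρ : ℕ) (a : Fin ρ) (g : ℝ × ℝ × (Fin ρ → ℝ) → ℝ) (p : ℝ × ℝ × (Fin ρ → ℝ)) : ℝ :=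
  deriv (fun s => g (p.1, p.2.1, Function.update p.2.2 a s)) (p.2.2 a)

/-- The coefficient of `∂_{v^a}` in the vector field `D̂ₓ`:
`v^{a+1}` for `a < ρ - 1` and `η̌` for `a = ρ - 1`. -/
def dxCoeff (ρ : ℕ) (η : ℝ × ℝ × (Fin ρ → ℝ) → ℝ) (p : ℝ × ℝ × (Fin ρ → ℝ)) (a : Fin ρ) : ℝ :=
  if h : (a : ℕ) + 1 < ρ then p.2.2 ⟨(a : ℕ) + 1, h⟩ else η p

/-- The restricted total derivative `D̂ₓ` acting on functions of `(t, x, v⁰, …, v^{ρ-1})`. -/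
def DX (ρ : ℕ) (η g : ℝ × ℝ × (Fin ρ → ℝ) → ℝ) : ℝ × ℝ × (Fin ρ → ℝ) → ℝ :=
  fun p => pX ρ g p + ∑ a : Fin ρ, dxCoeff ρ η p a * pV ρ a g p

/-- `Ĥ(t,x,v⁰,…,v^{ρ-1})`: the right-hand side `H` with `u_i` replaced by `v^i` for `i < ρ`
and by `D̂ₓ^{i-ρ} η̌` for `i ≥ ρ`.  This covers both cases `ρ > r` and `ρ ≤ r`. -/
def Hhat (ρ r : ℕ) (H : ℝ × ℝ × (Fin (r + 1) → ℝ) → ℝ)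
    (η : ℝ × ℝ × (Fin ρ → ℝ) → ℝ) : ℝ × ℝ × (Fin ρ → ℝ) → ℝ :=
  fun p => H (p.1, p.2.1, fun i =>
    if h : (i : ℕ) < ρ then p.2.2 ⟨(i : ℕ), h⟩ else (DX ρ η)^[(i : ℕ) - ρ] η p)

/-- The restricted total derivative `D̂ₜ` acting on functions of `(t, x, v⁰, …, v^{ρ-1})`. -/
def DT (ρ r : ℕ) (H : ℝ × ℝ × (Fin (r + 1) → ℝ) → ℝ)
    (η g : ℝ × ℝ × (Fin ρ → ℝ) → ℝ) : ℝ × ℝ × (Fin ρ → ℝ) → ℝ :=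
  fun p => pT ρ g p + ∑ b : Fin ρ, (DX ρ η)^[(b : ℕ)] (Hhat ρ r H η) p * pV ρ b g p

/-- The vector field `D̂ₓ` on `ℝ^{2+ρ}`, with components `(0, 1, v¹, …, v^{ρ-1}, η̌)`. -/
def DxVF (ρ : ℕ) (η : ℝ × ℝ × (Fin ρ → ℝ) → ℝ) :
    ℝ × ℝ × (Fin ρ → ℝ) → ℝ × ℝ × (Fin ρ → ℝ) :=
  fun p => (0, 1, fun a => dxCoeff ρ η p a)

/-- The vector field `D̂ₜ` on `ℝ^{2+ρ}`, with components `(1, 0, Ĥ, D̂ₓĤ, …, D̂ₓ^{ρ-1}Ĥ)`. -/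
def DtVF (ρ r : ℕ) (H : ℝ × ℝ × (Fin (r + 1) → ℝ) → ℝ)
    (η : ℝ × ℝ × (Fin ρ → ℝ) → ℝ) : ℝ × ℝ × (Fin ρ → ℝ) → ℝ × ℝ × (Fin ρ → ℝ) :=
  fun p => (1, 0, fun b => (DX ρ η)^[(b : ℕ)] (Hhat ρ r H η) p)

/-- The Lie bracket `[X,Y](p) = DY(p)·X(p) − DX(p)·Y(p)` of vector fields on `ℝ^{2+ρ}`. -/
def lieBracket (ρ : ℕ)
    (X Y : ℝ × ℝ × (Fin ρ → ℝ) → ℝ × ℝ × (Fin ρ → ℝ))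
    (p : ℝ × ℝ × (Fin ρ → ℝ)) : ℝ × ℝ × (Fin ρ → ℝ) :=
  fderiv ℝ Y p (X p) - fderiv ℝ X p (Y p)

section Aux

variable {ρ : ℕ}

lemma pT_eq_aux {g : ℝ × ℝ × (Fin ρ → ℝ) → ℝ} {L : (ℝ × ℝ × (Fin ρ → ℝ)) →L[ℝ] ℝ}
    {p : ℝ × ℝ × (Fin ρ → ℝ)} (hg : HasFDerivAt g L p) :
    pT ρ g p = L (1, 0, 0) := by
  have hc : HasDerivAt (fun s : ℝ => ((s, p.2) : ℝ × ℝ × (Fin ρ → ℝ)))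
      ((1 : ℝ), (0 : ℝ), (0 : Fin ρ → ℝ)) p.1 :=
    (hasDerivAt_id p.1).prodMk ((hasDerivAt_const p.1 p.2.1).prodMk (hasDerivAt_const p.1 p.2.2))
  exact (hg.comp_hasDerivAt p.1 hc).deriv

lemma pX_eq_aux {g : ℝ × ℝ × (Fin ρ → ℝ) → ℝ} {L : (ℝ × ℝ × (Fin ρ → ℝ)) →L[ℝ] ℝ}
    {p : ℝ × ℝ × (Fin ρ → ℝ)} (hg : HasFDerivAt g L p) :
    pX ρ g p = L (0, 1, 0) := by
  have hc : HasDerivAt (fun s : ℝ => ((p.1, s, p.2.2) : ℝ × ℝ × (Fin ρ → ℝ)))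
      ((0 : ℝ), (1 : ℝ), (0 : Fin ρ → ℝ)) p.2.1 :=
    (hasDerivAt_const p.2.1 p.1).prodMk ((hasDerivAt_id p.2.1).prodMk (hasDerivAt_const p.2.1 p.2.2))
  exact (hg.comp_hasDerivAt p.2.1 hc).deriv

lemma pV_eq_aux {g : ℝ × ℝ × (Fin ρ → ℝ) → ℝ} {L : (ℝ × ℝ × (Fin ρ → ℝ)) →L[ℝ] ℝ}
    {p : ℝ × ℝ × (Fin ρ → ℝ)} (a : Fin ρ) (hg : HasFDerivAt g L p) :
    pV ρ a g p = L (0, 0, Pi.single a 1) := by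
  have hc : HasDerivAt (fun s : ℝ => ((p.1, p.2.1, Function.update p.2.2 a s) : ℝ × ℝ × (Fin ρ → ℝ)))
      ((0 : ℝ), (0 : ℝ), Pi.single a (1 : ℝ)) (p.2.2 a) :=
    (hasDerivAt_const _ p.1).prodMk ((hasDerivAt_const _ p.2.1).prodMk
      (hasDerivAt_update p.2.2 a (p.2.2 a)))
  have hpe : ((p.1, p.2.1, Function.update p.2.2 a (p.2.2 a)) : ℝ × ℝ × (Fin ρ → ℝ)) = p := by
    rw [Function.update_eq_self]
  rw [← hpe] at hg
  exact (hg.comp_hasDerivAt (p.2.2 a) hc).deriv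

lemma clm_decomp (L : (ℝ × ℝ × (Fin ρ → ℝ)) →L[ℝ] ℝ) (v : ℝ × ℝ × (Fin ρ → ℝ)) :
    L v = v.1 * L (1, 0, 0) + v.2.1 * L (0, 1, 0) +
      ∑ a : Fin ρ, v.2.2 a * L (0, 0, Pi.single a 1) := by
  have hv : v = v.1 • ((1 : ℝ), (0 : ℝ), (0 : Fin ρ → ℝ)) +
      v.2.1 • ((0 : ℝ), (1 : ℝ), (0 : Fin ρ → ℝ)) +
      ∑ a : Fin ρ, v.2.2 a • (((0 : ℝ), (0 : ℝ), Pi.single a (1 : ℝ)) : ℝ × ℝ × (Fin ρ → ℝ)) := by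
    refine Prod.ext ?_ (Prod.ext ?_ ?_)
    · simp [Prod.fst_sum]
    · simp [Prod.snd_sum, Prod.fst_sum]
    · funext i
      simp [Prod.snd_sum, Finset.sum_apply, Pi.single_apply, mul_ite,
        Finset.sum_ite_eq, smul_eq_mul]
  conv_lhs => rw [hv]
  simp only [map_add, map_sum, map_smul, smul_eq_mul]

lemma fderiv_formula {g : ℝ × ℝ × (Fin ρ → ℝ) → ℝ} {L : (ℝ × ℝ × (Fin ρ → ℝ)) →L[ℝ] ℝ}
    {p : ℝ × ℝ × (Fin ρ → ℝ)} (hg : HasFDerivAt g L p) (v : ℝ × ℝ × (Fin ρ → ℝ)) :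
    L v = v.1 * pT ρ g p + v.2.1 * pX ρ g p + ∑ a : Fin ρ, v.2.2 a * pV ρ a g p := by
  rw [clm_decomp, pT_eq_aux hg, pX_eq_aux hg]
  congr 1
  exact Finset.sum_congr rfl fun a _ => by rw [pV_eq_aux a hg]

lemma DX_eq_fderiv {η g : ℝ × ℝ × (Fin ρ → ℝ) → ℝ} {p : ℝ × ℝ × (Fin ρ → ℝ)}
    (hg : DifferentiableAt ℝ g p) :
    DX ρ η g p = fderiv ℝ g p (DxVF ρ η p) := by
  have h := fderiv_formula hg.hasFDerivAt (DxVF ρ η p)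
  simp only [DxVF] at h
  simp only [DX, DxVF]
  rw [h]
  ring

lemma DT_eq_fderiv {r : ℕ} {H : ℝ × ℝ × (Fin (r + 1) → ℝ) → ℝ}
    {η g : ℝ × ℝ × (Fin ρ → ℝ) → ℝ} {p : ℝ × ℝ × (Fin ρ → ℝ)}
    (hg : DifferentiableAt ℝ g p) :
    DT ρ r H η g p = fderiv ℝ g p (DtVF ρ r H η p) := by
  have h := fderiv_formula hg.hasFDerivAt (DtVF ρ r H η p)
  simp only [DtVF] at h
  simp only [DT, DtVF]
  rw [h]
  ring

lemma contDiff_coord (i : Fin ρ) :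
    ContDiff ℝ (⊤ : ℕ∞) (fun p : ℝ × ℝ × (Fin ρ → ℝ) => p.2.2 i) :=
  (contDiff_pi.1 (contDiff_snd.comp contDiff_snd)) i

lemma contDiff_dxCoeff {η : ℝ × ℝ × (Fin ρ → ℝ) → ℝ} (hη : ContDiff ℝ (⊤ : ℕ∞) η) (a : Fin ρ) :
    ContDiff ℝ (⊤ : ℕ∞) (fun p => dxCoeff ρ η p a) := by
  by_cases h : (a : ℕ) + 1 < ρ
  · simp only [dxCoeff, dif_pos h]; exact contDiff_coord _
  · simp only [dxCoeff, dif_neg h]; exact hη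

lemma contDiff_DxVF {η : ℝ × ℝ × (Fin ρ → ℝ) → ℝ} (hη : ContDiff ℝ (⊤ : ℕ∞) η) :
    ContDiff ℝ (⊤ : ℕ∞) (DxVF ρ η) :=
  contDiff_const.prodMk (contDiff_const.prodMk (contDiff_pi.2 (contDiff_dxCoeff hη)))

lemma contDiff_DX {η g : ℝ × ℝ × (Fin ρ → ℝ) → ℝ} (hη : ContDiff ℝ (⊤ : ℕ∞) η)
    (hg : ContDiff ℝ (⊤ : ℕ∞) g) : ContDiff ℝ (⊤ : ℕ∞) (DX ρ η g) := by
  have h : DX ρ η g = fun p => fderiv ℝ g p (DxVF ρ η p) :=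
    funext fun p => DX_eq_fderiv (hg.differentiable (by simp) p)
  rw [h]
  exact (hg.fderiv_right (by simp)).clm_apply (contDiff_DxVF hη)

lemma contDiff_DX_iter {η : ℝ × ℝ × (Fin ρ → ℝ) → ℝ} (hη : ContDiff ℝ (⊤ : ℕ∞) η) :
    ∀ (n : ℕ) {g : ℝ × ℝ × (Fin ρ → ℝ) → ℝ}, ContDiff ℝ (⊤ : ℕ∞) g →
      ContDiff ℝ (⊤ : ℕ∞) ((DX ρ η)^[n] g) := by
  intro n
  induction n with
  | zero => intro g hg; simpa
  | succ n ih =>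
    intro g hg
    rw [Function.iterate_succ_apply']
    exact contDiff_DX hη (ih hg)

lemma contDiff_Hhat {r : ℕ} {H : ℝ × ℝ × (Fin (r + 1) → ℝ) → ℝ}
    {η : ℝ × ℝ × (Fin ρ → ℝ) → ℝ} (hH : ContDiff ℝ (⊤ : ℕ∞) H) (hη : ContDiff ℝ (⊤ : ℕ∞) η) :
    ContDiff ℝ (⊤ : ℕ∞) (Hhat ρ r H η) := by
  apply hH.comp
  refine contDiff_fst.prodMk ((contDiff_fst.comp contDiff_snd).prodMk
    (contDiff_pi.2 fun i => ?_))
  by_cases h : (i : ℕ) < ρ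
  · simp only [dif_pos h]; exact contDiff_coord _
  · simp only [dif_neg h]; exact contDiff_DX_iter hη _ hη

end Aux

/-- the Lie bracket `[D̂ₜ, D̂ₓ]` has all components zero except the
`v^{ρ-1}`-component, which equals `D̂ₜη̌ − D̂ₓ^ρ Ĥ`. -/
theorem lieBracket_DtVF_DxVF (ρ r : ℕ) (hρ : 1 ≤ ρ) (hr : 1 ≤ r)
    (H : ℝ × ℝ × (Fin (r + 1) → ℝ) → ℝ) (hH : ContDiff ℝ (⊤ : ℕ∞) H)
    (η : ℝ × ℝ × (Fin ρ → ℝ) → ℝ) (hη : ContDiff ℝ (⊤ : ℕ∞) η)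
    (p : ℝ × ℝ × (Fin ρ → ℝ)) :
    lieBracket ρ (DtVF ρ r H η) (DxVF ρ η) p =
      (0, 0, fun a : Fin ρ => if (a : ℕ) = ρ - 1
        then DT ρ r H η η p - (DX ρ η)^[ρ] (Hhat ρ r H η) p else 0) := by
  have hHhat : ContDiff ℝ (⊤ : ℕ∞) (Hhat ρ r H η) := contDiff_Hhat hH hη
  have hIter : ∀ n : ℕ, ContDiff ℝ (⊤ : ℕ∞) ((DX ρ η)^[n] (Hhat ρ r H η)) :=
    fun n => contDiff_DX_iter hη n hHhat
  have hY : HasFDerivAt (DxVF ρ η)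
      ((0 : (ℝ × ℝ × (Fin ρ → ℝ)) →L[ℝ] ℝ).prod
        ((0 : (ℝ × ℝ × (Fin ρ → ℝ)) →L[ℝ] ℝ).prod
          (ContinuousLinearMap.pi fun a : Fin ρ =>
            fderiv ℝ (fun q => dxCoeff ρ η q a) p))) p :=
    (hasFDerivAt_const 0 p).prodMk ((hasFDerivAt_const 1 p).prodMk
      (hasFDerivAt_pi.2 fun a =>
        (((contDiff_dxCoeff hη a).differentiable (by simp)) p).hasFDerivAt))
  have hX : HasFDerivAt (DtVF ρ r H η)
      ((0 : (ℝ × ℝ × (Fin ρ → ℝ)) →L[ℝ] ℝ).prod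
        ((0 : (ℝ × ℝ × (Fin ρ → ℝ)) →L[ℝ] ℝ).prod
          (ContinuousLinearMap.pi fun b : Fin ρ =>
            fderiv ℝ ((DX ρ η)^[(b : ℕ)] (Hhat ρ r H η)) p))) p :=
    (hasFDerivAt_const 1 p).prodMk ((hasFDerivAt_const 0 p).prodMk
      (hasFDerivAt_pi.2 fun b =>
        (((hIter (b : ℕ)).differentiable (by simp)) p).hasFDerivAt))
  unfold lieBracket
  rw [hY.fderiv, hX.fderiv]
  refine Prod.ext ?_ (Prod.ext ?_ ?_)
  · simp
  · simp
  · funext a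
    simp only [ContinuousLinearMap.prod_apply, ContinuousLinearMap.pi_apply,
      ContinuousLinearMap.zero_apply, Prod.snd_sub, Prod.fst_sub, Pi.sub_apply]
    have hsecond : fderiv ℝ ((DX ρ η)^[(a : ℕ)] (Hhat ρ r H η)) p (DxVF ρ η p)
        = (DX ρ η)^[(a : ℕ) + 1] (Hhat ρ r H η) p := by
      rw [Function.iterate_succ_apply',
        DX_eq_fderiv (((hIter (a : ℕ)).differentiable (by simp)) p)]
    by_cases h : (a : ℕ) + 1 < ρ
    · have hfun : (fun q => dxCoeff ρ η q a)
          = fun q : ℝ × ℝ × (Fin ρ → ℝ) => q.2.2 ⟨(a : ℕ) + 1, h⟩ := by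
        funext q; simp [dxCoeff, dif_pos h]
      have hclm : HasFDerivAt (fun q : ℝ × ℝ × (Fin ρ → ℝ) => q.2.2 ⟨(a : ℕ) + 1, h⟩)
          ((ContinuousLinearMap.proj (⟨(a : ℕ) + 1, h⟩ : Fin ρ)).comp
            ((ContinuousLinearMap.snd ℝ ℝ (Fin ρ → ℝ)).comp
              (ContinuousLinearMap.snd ℝ ℝ (ℝ × (Fin ρ → ℝ))))) p :=
        (((ContinuousLinearMap.proj (⟨(a : ℕ) + 1, h⟩ : Fin ρ)).comp
            ((ContinuousLinearMap.snd ℝ ℝ (Fin ρ → ℝ)).comp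
              (ContinuousLinearMap.snd ℝ ℝ (ℝ × (Fin ρ → ℝ))))).hasFDerivAt)
      rw [hfun, hclm.fderiv, hsecond]
      have : ((ContinuousLinearMap.proj (⟨(a : ℕ) + 1, h⟩ : Fin ρ)).comp
            ((ContinuousLinearMap.snd ℝ ℝ (Fin ρ → ℝ)).comp
              (ContinuousLinearMap.snd ℝ ℝ (ℝ × (Fin ρ → ℝ))))) (DtVF ρ r H η p)
          = (DX ρ η)^[(a : ℕ) + 1] (Hhat ρ r H η) p := by
        simp [DtVF]
      rw [this, sub_self, if_neg (by omega)]
    · have ha : (a : ℕ) + 1 = ρ := by have := a.isLt; omega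
      have hfun : (fun q => dxCoeff ρ η q a) = η := by
        funext q; simp [dxCoeff, dif_neg h]
      rw [hfun, hsecond, ← DT_eq_fderiv (r := r) (H := H) (hη.differentiable (by simp) p),
        if_pos (by omega : (a : ℕ) = ρ - 1), ha]
end
end

section
/- Let u and ũ be two smooth functions that both solve E and are both Q-invariant on a common open rectangle I × J ⊆ ℝ², and suppose that at some point (t₀, x₀) ∈ I × J their derivatives agree up to order ρ − 1: ∂ₓ^{a−1}u(t₀,x₀) = ∂ₓ^{a−1}ũ(t₀,x₀) for a = 1, …, ρ. Then u = ũ on a neighborhood of (t₀, x₀) in I × J. (Hence the set of joint solutions of the equation u_ρ = η̌(t,x,u_{(ρ−1,x)}) and the evolution equation E is parameterized by at most ρ constants.) -/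
noncomputable section

open Set Filter Metric Real
open scoped ContDiff Topology NNReal

namespace JSLU

/-- directional partial derivative -/
noncomputable def pdv (v : ℝ × ℝ) (F : ℝ × ℝ → ℝ) : ℝ × ℝ → ℝ := fun q => fderiv ℝ F q v

variable {s : Set (ℝ × ℝ)} {F : ℝ × ℝ → ℝ} {v : ℝ × ℝ} {q : ℝ × ℝ}

lemma pdv_contDiffOn (hs : IsOpen s) (hF : ContDiffOn ℝ ∞ F s) :
    ContDiffOn ℝ ∞ (pdv v F) s :=
  (hF.fderiv_of_isOpen hs (by simp)).clm_apply contDiffOn_const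

lemma pdv_iter_contDiffOn (hs : IsOpen s) (hF : ContDiffOn ℝ ∞ F s) :
    ∀ k : ℕ, ContDiffOn ℝ ∞ ((pdv v)^[k] F) s := by
  intro k
  induction k with
  | zero => exact hF
  | succ k ih =>
    rw [Function.iterate_succ_apply']
    exact pdv_contDiffOn hs ih

lemma hasDerivAt_slice_x (hs : IsOpen s) (hF : ContDiffOn ℝ ∞ F s) (hq : q ∈ s) :
    HasDerivAt (fun x => F (q.1, x)) (pdv (0, 1) F q) q.2 := by
  have hd : HasFDerivAt F (fderiv ℝ F q) q :=
    ((hF.contDiffAt (hs.mem_nhds hq)).differentiableAt (by simp)).hasFDerivAt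
  have hline : HasDerivAt (fun x : ℝ => ((q.1, x) : ℝ × ℝ)) ((0 : ℝ), (1 : ℝ)) q.2 :=
    (hasDerivAt_const _ _).prodMk (hasDerivAt_id _)
  exact hd.comp_hasDerivAt q.2 hline

lemma hasDerivAt_slice_t (hs : IsOpen s) (hF : ContDiffOn ℝ ∞ F s) (hq : q ∈ s) :
    HasDerivAt (fun t => F (t, q.2)) (pdv (1, 0) F q) q.1 := by
  have hd : HasFDerivAt F (fderiv ℝ F q) q :=
    ((hF.contDiffAt (hs.mem_nhds hq)).differentiableAt (by simp)).hasFDerivAt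
  have hline : HasDerivAt (fun t : ℝ => ((t, q.2) : ℝ × ℝ)) ((1 : ℝ), (0 : ℝ)) q.1 :=
    (hasDerivAt_id _).prodMk (hasDerivAt_const _ _)
  exact hd.comp_hasDerivAt q.1 hline

lemma pdv_comm (hs : IsOpen s) (hF : ContDiffOn ℝ ∞ F s) (hq : q ∈ s) :
    pdv (1, 0) (pdv (0, 1) F) q = pdv (0, 1) (pdv (1, 0) F) q := by
  have hFa : ContDiffAt ℝ ∞ F q := hF.contDiffAt (hs.mem_nhds hq)
  have hsymm : IsSymmSndFDerivAt ℝ F q := hFa.isSymmSndFDerivAt (by simp; decide)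
  have hder : DifferentiableAt ℝ (fderiv ℝ F) q :=
    (hFa.fderiv_right (m := 1) (by decide)).differentiableAt one_ne_zero
  have key : ∀ v w : ℝ × ℝ,
      fderiv ℝ (fun p => fderiv ℝ F p v) q w = fderiv ℝ (fderiv ℝ F) q w v := by
    intro v w
    rw [fderiv_clm_apply hder (differentiableAt_const v)]
    simp
  show fderiv ℝ (fun p => fderiv ℝ F p (0,1)) q (1,0) = fderiv ℝ (fun p => fderiv ℝ F p (1,0)) q (0,1)
  rw [key, key]
  exact hsymm.eq _ _

lemma iter_slice_x (hs : IsOpen s) (hF : ContDiffOn ℝ ∞ F s) :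
    ∀ k : ℕ, ∀ q ∈ s, deriv^[k] (fun x => F (q.1, x)) q.2 = (pdv (0, 1))^[k] F q := by
  intro k
  induction k with
  | zero => intro q hq; rfl
  | succ k ih =>
    intro q hq
    rw [Function.iterate_succ_apply', Function.iterate_succ_apply']
    have hmem : {x : ℝ | (q.1, x) ∈ s} ∈ 𝓝 q.2 := by
      have : IsOpen {x : ℝ | (q.1, x) ∈ s} := hs.preimage (by fun_prop)
      exact this.mem_nhds hq
    have heq : (fun x => deriv^[k] (fun y => F (q.1, y)) x)
        =ᶠ[𝓝 q.2] fun x => (pdv (0, 1))^[k] F (q.1, x) := by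
      filter_upwards [hmem] with x hx
      exact ih (q.1, x) hx
    rw [heq.deriv_eq]
    exact (hasDerivAt_slice_x hs (pdv_iter_contDiffOn hs hF k) hq).deriv

lemma pdv_swap_iter (hs : IsOpen s) (hF : ContDiffOn ℝ ∞ F s) :
    ∀ a : ℕ, ∀ q ∈ s, pdv (1, 0) ((pdv (0, 1))^[a] F) q = (pdv (0, 1))^[a] (pdv (1, 0) F) q := by
  intro a
  induction a with
  | zero => intro q hq; rfl
  | succ a ih =>
    intro q hq
    rw [Function.iterate_succ_apply']
    rw [pdv_comm hs (pdv_iter_contDiffOn hs hF a) hq]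
    have heq : pdv (1, 0) ((pdv (0, 1))^[a] F) =ᶠ[𝓝 q] (pdv (0, 1))^[a] (pdv (1, 0) F) := by
      filter_upwards [hs.mem_nhds hq] with p hp
      exact ih p hp
    show fderiv ℝ _ q _ = _
    rw [heq.fderiv_eq]
    rw [Function.iterate_succ_apply' (pdv (0,1)) a (pdv (1,0) F)]
    rfl





def shiftF (ρ : ℕ) (η : ℝ × ℝ × (Fin ρ → ℝ) → ℝ) : ℝ × ℝ × (Fin ρ → ℝ) → (Fin ρ → ℝ) :=
  fun p b => if h : (b : ℕ) + 1 < ρ then p.2.2 ⟨(b : ℕ) + 1, h⟩ else η p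

noncomputable def eF (ρ : ℕ) (η : ℝ × ℝ × (Fin ρ → ℝ) → ℝ) : ℕ → (ℝ × ℝ × (Fin ρ → ℝ) → ℝ)
  | 0 => fun p => if h : 0 < ρ then p.2.2 ⟨0, h⟩ else η p
  | (k+1) => fun p => fderiv ℝ (eF ρ η k) p (0, 1, shiftF ρ η p)

noncomputable def PF (ρ : ℕ) (η : ℝ × ℝ × (Fin ρ → ℝ) → ℝ) (r : ℕ)
    (H : ℝ × ℝ × (Fin (r + 1) → ℝ) → ℝ) : ℕ → (ℝ × ℝ × (Fin ρ → ℝ) → ℝ)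
  | 0 => fun p => H (p.1, p.2.1, fun i => eF ρ η (i : ℕ) p)
  | (a+1) => fun p => fderiv ℝ (PF ρ η r H a) p (0, 1, shiftF ρ η p)

variable {ρ r : ℕ} {η : ℝ × ℝ × (Fin ρ → ℝ) → ℝ} {H : ℝ × ℝ × (Fin (r + 1) → ℝ) → ℝ}

lemma proj2_contDiff (i : Fin ρ) :
    ContDiff ℝ ∞ (fun p : ℝ × ℝ × (Fin ρ → ℝ) => p.2.2 i) :=
  (ContinuousLinearMap.proj (R := ℝ) (φ := fun _ : Fin ρ => ℝ) i).contDiff.comp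
    (contDiff_snd.comp contDiff_snd)

lemma shiftF_contDiff (hη : ContDiff ℝ ∞ η) : ContDiff ℝ ∞ (shiftF ρ η) := by
  rw [contDiff_pi]
  intro b
  by_cases h : (b : ℕ) + 1 < ρ
  · simp only [shiftF, dif_pos h]
    exact proj2_contDiff _
  · simp only [shiftF, dif_neg h]
    exact hη

lemma eF_contDiff (hη : ContDiff ℝ ∞ η) : ∀ k, ContDiff ℝ ∞ (eF ρ η k) := by
  intro k
  induction k with
  | zero =>
    by_cases h : 0 < ρ
    · simp only [eF, dif_pos h]; exact proj2_contDiff _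
    · simp only [eF, dif_neg h]; exact hη
  | succ k ih =>
    show ContDiff ℝ ∞ fun p => fderiv ℝ (eF ρ η k) p (0, 1, shiftF ρ η p)
    exact (ih.fderiv_right (m := ∞) (by decide)).clm_apply
      (contDiff_const.prodMk (contDiff_const.prodMk (shiftF_contDiff hη)))

lemma PF_contDiff (hη : ContDiff ℝ ∞ η) (hH : ContDiff ℝ ∞ H) :
    ∀ a, ContDiff ℝ ∞ (PF ρ η r H a) := by
  intro a
  induction a with
  | zero =>
    show ContDiff ℝ ∞ fun p => H (p.1, p.2.1, fun i => eF ρ η (i : ℕ) p)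
    exact hH.comp (contDiff_fst.prodMk ((contDiff_fst.comp contDiff_snd).prodMk
      (contDiff_pi.2 fun i => eF_contDiff hη (i : ℕ))))
  | succ a ih =>
    show ContDiff ℝ ∞ fun p => fderiv ℝ (PF ρ η r H a) p (0, 1, shiftF ρ η p)
    exact (ih.fderiv_right (m := ∞) (by decide)).clm_apply
      (contDiff_const.prodMk (contDiff_const.prodMk (shiftF_contDiff hη)))

def jet (ρ : ℕ) (f : ℝ × ℝ → ℝ) : ℝ × ℝ → (Fin ρ → ℝ) :=
  fun q b => (pdv (0, 1))^[(b : ℕ)] f q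

def gmap (ρ : ℕ) (f : ℝ × ℝ → ℝ) : ℝ × ℝ → ℝ × ℝ × (Fin ρ → ℝ) :=
  fun q => (q.1, q.2, jet ρ f q)

end JSLU

open JSLU Set Filter Metric Real
open scoped ContDiff Topology NNReal

namespace JSLU

variable {ρ r : ℕ} {η : ℝ × ℝ × (Fin ρ → ℝ) → ℝ} {H : ℝ × ℝ × (Fin (r + 1) → ℝ) → ℝ}
variable {s : Set (ℝ × ℝ)} {f : ℝ × ℝ → ℝ} {q : ℝ × ℝ}

lemma jet_contDiffOn (hs : IsOpen s) (hf : ContDiffOn ℝ ∞ f s) :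
    ContDiffOn ℝ ∞ (jet ρ f) s :=
  contDiffOn_pi.2 fun b => pdv_iter_contDiffOn hs hf (b : ℕ)

lemma gmap_hasFDerivAt (hs : IsOpen s) (hf : ContDiffOn ℝ ∞ f s) (hq : q ∈ s) :
    HasFDerivAt (gmap ρ f)
      ((ContinuousLinearMap.fst ℝ ℝ ℝ).prod ((ContinuousLinearMap.snd ℝ ℝ ℝ).prod
        (ContinuousLinearMap.pi fun b : Fin ρ =>
          fderiv ℝ ((pdv (0, 1))^[(b : ℕ)] f) q))) q := by
  refine hasFDerivAt_fst.prodMk (hasFDerivAt_snd.prodMk ?_)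
  apply hasFDerivAt_pi''
  intro b
  rw [ContinuousLinearMap.proj_pi]
  exact (((pdv_iter_contDiffOn hs hf (b : ℕ)).contDiffAt
    (hs.mem_nhds hq)).differentiableAt (by decide)).hasFDerivAt

lemma pdv_comp_gmap (hs : IsOpen s) (hf : ContDiffOn ℝ ∞ f s)
    (hinv : ∀ p ∈ s, (pdv (0, 1))^[ρ] f p = η (gmap ρ f p))
    {A : ℝ × ℝ × (Fin ρ → ℝ) → ℝ} (hA : ContDiff ℝ ∞ A) {G : ℝ × ℝ → ℝ}
    (hG : ∀ p ∈ s, G p = A (gmap ρ f p)) (hq : q ∈ s) :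
    pdv (0, 1) G q = fderiv ℝ A (gmap ρ f q) (0, 1, shiftF ρ η (gmap ρ f q)) := by
  have hg := gmap_hasFDerivAt (ρ := ρ) hs hf hq
  have hA' : HasFDerivAt A (fderiv ℝ A (gmap ρ f q)) (gmap ρ f q) :=
    ((hA.differentiable (by decide)) (gmap ρ f q)).hasFDerivAt
  have hcomp := hA'.comp q hg
  have heq : G =ᶠ[𝓝 q] A ∘ gmap ρ f := by
    filter_upwards [hs.mem_nhds hq] with p hp
    exact hG p hp
  show fderiv ℝ G q (0, 1) = _
  rw [heq.fderiv_eq, hcomp.fderiv, ContinuousLinearMap.comp_apply]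
  congr 1
  refine Prod.ext (by simp) (Prod.ext (by simp) ?_)
  simp only [ContinuousLinearMap.prod_apply, ContinuousLinearMap.pi_apply]
  funext b
  show pdv (0, 1) ((pdv (0, 1))^[(b : ℕ)] f) q = _
  rw [← Function.iterate_succ_apply' (pdv (0, 1))]
  unfold shiftF
  split_ifs with h
  · rfl
  · have hb : ((b : ℕ)).succ = ρ := by omega
    rw [hb]
    exact hinv q hq

lemma jet_eq_eF (hs : IsOpen s) (hf : ContDiffOn ℝ ∞ f s) (hη : ContDiff ℝ ∞ η)
    (hinv : ∀ p ∈ s, (pdv (0, 1))^[ρ] f p = η (gmap ρ f p)) (hρ : 0 < ρ) :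
    ∀ k, ∀ q ∈ s, (pdv (0, 1))^[k] f q = eF ρ η k (gmap ρ f q) := by
  intro k
  induction k with
  | zero =>
    intro q hq
    show f q = _
    simp only [eF, dif_pos hρ]
    rfl
  | succ k ih =>
    intro q hq
    rw [Function.iterate_succ_apply']
    exact pdv_comp_gmap hs hf hinv (eF_contDiff hη k) ih hq

lemma pdvT_eq_PF (hs : IsOpen s) (hf : ContDiffOn ℝ ∞ f s) (hη : ContDiff ℝ ∞ η)
    (hH : ContDiff ℝ ∞ H)
    (hinv : ∀ p ∈ s, (pdv (0, 1))^[ρ] f p = η (gmap ρ f p)) (hρ : 0 < ρ)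
    (hsol : ∀ p ∈ s, pdv (1, 0) f p = H (p.1, p.2, fun i => (pdv (0, 1))^[(i : ℕ)] f p)) :
    ∀ a, ∀ q ∈ s, (pdv (0, 1))^[a] (pdv (1, 0) f) q = PF ρ η r H a (gmap ρ f q) := by
  intro a
  induction a with
  | zero =>
    intro q hq
    show pdv (1, 0) f q = _
    rw [hsol q hq]
    show _ = H (q.1, q.2, fun i => eF ρ η (i : ℕ) (gmap ρ f q))
    congr 1
    refine Prod.ext rfl (Prod.ext rfl ?_)
    funext i
    exact jet_eq_eF hs hf hη hinv hρ (i : ℕ) q hq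
  | succ a ih =>
    intro q hq
    rw [Function.iterate_succ_apply']
    exact pdv_comp_gmap hs hf hinv (PF_contDiff hη hH a) ih hq

lemma jet_x_hasDerivAt (hs : IsOpen s) (hf : ContDiffOn ℝ ∞ f s)
    (hinv : ∀ p ∈ s, (pdv (0, 1))^[ρ] f p = η (gmap ρ f p)) (hq : q ∈ s) :
    HasDerivAt (fun x => jet ρ f (q.1, x)) (shiftF ρ η (gmap ρ f q)) q.2 := by
  rw [hasDerivAt_pi]
  intro b
  have h1 := hasDerivAt_slice_x hs (pdv_iter_contDiffOn (v := ((0:ℝ),(1:ℝ))) hs hf (b : ℕ)) hq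
  have hval : pdv (0, 1) ((pdv (0, 1))^[(b : ℕ)] f) q = shiftF ρ η (gmap ρ f q) b := by
    rw [← Function.iterate_succ_apply' (pdv (0, 1))]
    unfold shiftF
    split_ifs with h
    · rfl
    · have hb : ((b : ℕ)).succ = ρ := by omega
      rw [hb]
      exact hinv q hq
  rw [← hval]
  exact h1

lemma jet_t_hasDerivAt (hs : IsOpen s) (hf : ContDiffOn ℝ ∞ f s) (hη : ContDiff ℝ ∞ η)
    (hH : ContDiff ℝ ∞ H)
    (hinv : ∀ p ∈ s, (pdv (0, 1))^[ρ] f p = η (gmap ρ f p)) (hρ : 0 < ρ)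
    (hsol : ∀ p ∈ s, pdv (1, 0) f p = H (p.1, p.2, fun i => (pdv (0, 1))^[(i : ℕ)] f p))
    (hq : q ∈ s) :
    HasDerivAt (fun t => jet ρ f (t, q.2))
      (fun b : Fin ρ => PF ρ η r H (b : ℕ) (gmap ρ f q)) q.1 := by
  rw [hasDerivAt_pi]
  intro b
  have h1 := hasDerivAt_slice_t hs (pdv_iter_contDiffOn (v := ((0:ℝ),(1:ℝ))) hs hf (b : ℕ)) hq
  have hval : pdv (1, 0) ((pdv (0, 1))^[(b : ℕ)] f) q = PF ρ η r H (b : ℕ) (gmap ρ f q) := by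
    rw [pdv_swap_iter hs hf (b : ℕ) q hq]
    exact pdvT_eq_PF hs hf hη hH hinv hρ hsol (b : ℕ) q hq
  rw [← hval]
  exact h1




variable {E : Type*} [NormedAddCommGroup E] [NormedSpace ℝ E]

lemma zero_on_Icc_right {y y' : ℝ → E} {a b C : ℝ}
    (hy : ∀ t ∈ Icc a b, HasDerivAt y (y' t) t)
    (hb : ∀ t ∈ Icc a b, ‖y' t‖ ≤ C * ‖y t‖) (ha : y a = 0) :
    ∀ t ∈ Icc a b, y t = 0 := by
  intro t ht
  have key := norm_le_gronwallBound_of_norm_deriv_right_le (f := y) (f' := y')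
    (δ := 0) (K := C) (ε := 0) (a := a) (b := b)
    (fun τ hτ => (hy τ hτ).continuousAt.continuousWithinAt)
    (fun τ hτ => (hy τ (Ico_subset_Icc_self hτ)).hasDerivWithinAt)
    (by rw [ha]; simp)
    (fun τ hτ => by simpa using hb τ (Ico_subset_Icc_self hτ))
    t ht
  rw [gronwallBound_ε0_δ0] at key
  exact norm_le_zero_iff.1 key

lemma zero_on_Icc_two {y y' : ℝ → E} {t₀ δ C : ℝ} (hδ : 0 ≤ δ)
    (hy : ∀ t ∈ Icc (t₀ - δ) (t₀ + δ), HasDerivAt y (y' t) t)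
    (hb : ∀ t ∈ Icc (t₀ - δ) (t₀ + δ), ‖y' t‖ ≤ C * ‖y t‖) (h0 : y t₀ = 0) :
    ∀ t ∈ Icc (t₀ - δ) (t₀ + δ), y t = 0 := by
  have hsub : Icc t₀ (t₀ + δ) ⊆ Icc (t₀ - δ) (t₀ + δ) :=
    Icc_subset_Icc (by linarith) le_rfl
  have hsub' : ∀ t ∈ Icc t₀ (t₀ + δ), 2 * t₀ - t ∈ Icc (t₀ - δ) (t₀ + δ) := by
    intro t ht
    rcases ht with ⟨h1, h2⟩
    constructor <;> linarith
  have hfwd : ∀ t ∈ Icc t₀ (t₀ + δ), y t = 0 :=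
    zero_on_Icc_right (fun t ht => hy t (hsub ht)) (fun t ht => hb t (hsub ht)) h0
  -- backward via reflection
  have hbwd : ∀ t ∈ Icc t₀ (t₀ + δ), y (2 * t₀ - t) = 0 := by
    have hy' : ∀ t ∈ Icc t₀ (t₀ + δ),
        HasDerivAt (fun τ => y (2 * t₀ - τ)) ((-1 : ℝ) • y' (2 * t₀ - t)) t := by
      intro t ht
      have hin : HasDerivAt (fun τ : ℝ => 2 * t₀ - τ) (-1) t := by
        have h := (hasDerivAt_const t (2 * t₀)).sub (hasDerivAt_id' t)
        rw [zero_sub] at h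
        exact h
      exact (hy _ (hsub' t ht)).scomp t hin
    refine zero_on_Icc_right (C := C) (y' := fun t => (-1 : ℝ) • y' (2 * t₀ - t)) hy' ?_ ?_
    · intro t ht
      rw [norm_smul]
      simpa using hb _ (hsub' t ht)
    · show y (2 * t₀ - t₀) = 0
      rw [show 2 * t₀ - t₀ = t₀ by ring]
      exact h0
  intro t ht
  rcases le_total t₀ t with h | h
  · exact hfwd t ⟨h, ht.2⟩
  · have : 2 * t₀ - t ∈ Icc t₀ (t₀ + δ) := by
      constructor <;> [linarith [ht.1]; linarith [ht.1]]
    have := hbwd _ this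
    simpa using this

lemma exists_lipschitzOnWith_of_contDiff {E F : Type*} [NormedAddCommGroup E]
    [NormedSpace ℝ E] [NormedAddCommGroup F] [NormedSpace ℝ F] {Φ : E → F}
    (hΦ : ContDiff ℝ ∞ Φ) {D : Set E} (hD : Convex ℝ D) (hDc : IsCompact D) :
    ∃ C : ℝ≥0, LipschitzOnWith C Φ D := by
  have hcont : ContinuousOn (fderiv ℝ Φ) D :=
    ((hΦ.fderiv_right (m := ∞) (by decide)).continuous).continuousOn
  obtain ⟨C, hC⟩ := hDc.exists_bound_of_continuousOn hcont
  refine ⟨⟨max C 0, le_max_right _ _⟩, ?_⟩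
  apply hD.lipschitzOnWith_of_nnnorm_fderiv_le
    (fun x _ => (hΦ.differentiable (by decide)).differentiableAt)
  intro x hx
  refine NNReal.coe_le_coe.1 ?_
  calc ‖fderiv ℝ Φ x‖ ≤ C := hC x hx
  _ ≤ max C 0 := le_max_left _ _


end JSLU


/-- `u` solves the evolution equation `uₜ = H(t, x, u, ∂ₓu, …, ∂ₓ^r u)` on the set `s`. -/
def SolvesE (r : ℕ) (H : ℝ × ℝ × (Fin (r + 1) → ℝ) → ℝ) (u : ℝ → ℝ → ℝ)
    (s : Set (ℝ × ℝ)) : Prop :=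
  ∀ q ∈ s, deriv (fun t => u t q.2) q.1
    = H (q.1, q.2, fun i => deriv^[(i : ℕ)] (u q.1) q.2)

/-- `u` is `Q`-invariant: `∂ₓ^ρ u = η̌(t, x, u, ∂ₓu, …, ∂ₓ^{ρ-1}u)` on the set `s`. -/
def QInvariant (ρ : ℕ) (η : ℝ × ℝ × (Fin ρ → ℝ) → ℝ) (u : ℝ → ℝ → ℝ)
    (s : Set (ℝ × ℝ)) : Prop :=
  ∀ q ∈ s, deriv^[ρ] (u q.1) q.2 = η (q.1, q.2, fun a => deriv^[(a : ℕ)] (u q.1) q.2)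

/-- two smooth joint solutions of the evolution equation `E` and of the
constraint `u_ρ = η̌(t, x, u_{(ρ-1,x)})` on a common open rectangle `I × J` whose
`x`-derivatives up to order `ρ - 1` agree at some point `(t₀, x₀)` coincide on a
neighborhood of `(t₀, x₀)`. -/
theorem joint_solutions_local_uniqueness
    (ρ r : ℕ) (hρ : 1 ≤ ρ) (hr : 1 ≤ r)
    (H : ℝ × ℝ × (Fin (r + 1) → ℝ) → ℝ) (hH : ContDiff ℝ (⊤ : ℕ∞) H)
    (η : ℝ × ℝ × (Fin ρ → ℝ) → ℝ) (hη : ContDiff ℝ (⊤ : ℕ∞) η)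
    (I J : Set ℝ) (hI : IsOpen I) (hIc : I.OrdConnected)
    (hJ : IsOpen J) (hJc : J.OrdConnected)
    (u u' : ℝ → ℝ → ℝ)
    (hu : ContDiffOn ℝ (⊤ : ℕ∞) (fun q : ℝ × ℝ => u q.1 q.2) (I ×ˢ J))
    (hu' : ContDiffOn ℝ (⊤ : ℕ∞) (fun q : ℝ × ℝ => u' q.1 q.2) (I ×ˢ J))
    (husol : SolvesE r H u (I ×ˢ J)) (huinv : QInvariant ρ η u (I ×ˢ J))
    (hu'sol : SolvesE r H u' (I ×ˢ J)) (hu'inv : QInvariant ρ η u' (I ×ˢ J))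
    (t₀ x₀ : ℝ) (ht₀ : t₀ ∈ I) (hx₀ : x₀ ∈ J)
    (hjet : ∀ a : Fin ρ, deriv^[(a : ℕ)] (u t₀) x₀ = deriv^[(a : ℕ)] (u' t₀) x₀) :
    ∃ N : Set (ℝ × ℝ), IsOpen N ∧ (t₀, x₀) ∈ N ∧ N ⊆ I ×ˢ J ∧
      ∀ q ∈ N, u q.1 q.2 = u' q.1 q.2 := by
  classical
  set s : Set (ℝ × ℝ) := I ×ˢ J with hs_def
  have hso : IsOpen s := hI.prod hJ
  set f : ℝ × ℝ → ℝ := fun q => u q.1 q.2 with hf_def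
  set f' : ℝ × ℝ → ℝ := fun q => u' q.1 q.2 with hf'_def
  have hρ0 : 0 < ρ := hρ
  have hf : ContDiffOn ℝ ∞ f s := hu.of_le (by simp)
  have hf' : ContDiffOn ℝ ∞ f' s := hu'.of_le (by simp)
  have hηi : ContDiff ℝ ∞ η := hη.of_le (by simp)
  have hHi : ContDiff ℝ ∞ H := hH.of_le (by simp)
  have hq₀ : ((t₀, x₀) : ℝ × ℝ) ∈ s := ⟨ht₀, hx₀⟩
  -- translate hypotheses
  have hinv : ∀ p ∈ s, (pdv (0, 1))^[ρ] f p = η (gmap ρ f p) := by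
    intro p hp
    have hjets : (fun a : Fin ρ => deriv^[(a : ℕ)] (u p.1) p.2) = jet ρ f p :=
      funext fun a => iter_slice_x hso hf (a : ℕ) p hp
    calc (pdv (0, 1))^[ρ] f p = deriv^[ρ] (u p.1) p.2 := (iter_slice_x hso hf ρ p hp).symm
    _ = η (p.1, p.2, fun a : Fin ρ => deriv^[(a : ℕ)] (u p.1) p.2) := huinv p hp
    _ = η (gmap ρ f p) := by rw [hjets]; rfl
  have hinv' : ∀ p ∈ s, (pdv (0, 1))^[ρ] f' p = η (gmap ρ f' p) := by
    intro p hp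
    have hjets : (fun a : Fin ρ => deriv^[(a : ℕ)] (u' p.1) p.2) = jet ρ f' p :=
      funext fun a => iter_slice_x hso hf' (a : ℕ) p hp
    calc (pdv (0, 1))^[ρ] f' p = deriv^[ρ] (u' p.1) p.2 := (iter_slice_x hso hf' ρ p hp).symm
    _ = η (p.1, p.2, fun a : Fin ρ => deriv^[(a : ℕ)] (u' p.1) p.2) := hu'inv p hp
    _ = η (gmap ρ f' p) := by rw [hjets]; rfl
  have hsol : ∀ p ∈ s, pdv (1, 0) f p
      = H (p.1, p.2, fun i => (pdv (0, 1))^[(i : ℕ)] f p) := by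
    intro p hp
    have hd := (hasDerivAt_slice_t hso hf hp).deriv
    calc pdv (1, 0) f p = deriv (fun t => u t p.2) p.1 := hd.symm
    _ = H (p.1, p.2, fun i => deriv^[(i : ℕ)] (u p.1) p.2) := husol p hp
    _ = H (p.1, p.2, fun i => (pdv (0, 1))^[(i : ℕ)] f p) := by
        congr 1
        exact Prod.ext rfl (Prod.ext rfl (funext fun i => iter_slice_x hso hf (i : ℕ) p hp))
  have hsol' : ∀ p ∈ s, pdv (1, 0) f' p
      = H (p.1, p.2, fun i => (pdv (0, 1))^[(i : ℕ)] f' p) := by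
    intro p hp
    have hd := (hasDerivAt_slice_t hso hf' hp).deriv
    calc pdv (1, 0) f' p = deriv (fun t => u' t p.2) p.1 := hd.symm
    _ = H (p.1, p.2, fun i => deriv^[(i : ℕ)] (u' p.1) p.2) := hu'sol p hp
    _ = H (p.1, p.2, fun i => (pdv (0, 1))^[(i : ℕ)] f' p) := by
        congr 1
        exact Prod.ext rfl (Prod.ext rfl (funext fun i => iter_slice_x hso hf' (i : ℕ) p hp))
  have hjet0 : jet ρ f (t₀, x₀) = jet ρ f' (t₀, x₀) := by
    funext a
    calc jet ρ f (t₀, x₀) a = deriv^[(a : ℕ)] (u t₀) x₀ :=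
      (iter_slice_x hso hf (a : ℕ) (t₀, x₀) hq₀).symm
    _ = deriv^[(a : ℕ)] (u' t₀) x₀ := hjet a
    _ = jet ρ f' (t₀, x₀) a := iter_slice_x hso hf' (a : ℕ) (t₀, x₀) hq₀
  -- choose the rectangle
  obtain ⟨ε, hε, hball⟩ := Metric.isOpen_iff.1 hso (t₀, x₀) hq₀
  set δ : ℝ := ε / 2 with hδdef
  have hδ : 0 < δ := half_pos hε
  set Kt : Set ℝ := Icc (t₀ - δ) (t₀ + δ) with hKt_def
  set Kx : Set ℝ := Icc (x₀ - δ) (x₀ + δ) with hKx_def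
  set K : Set (ℝ × ℝ) := Kt ×ˢ Kx with hK_def
  have hKs : K ⊆ s := by
    rintro ⟨a, b⟩ ⟨ha, hb⟩
    apply hball
    rw [Metric.mem_ball, Prod.dist_eq]
    have h1 : dist a t₀ ≤ δ := by
      rw [Real.dist_eq]; exact abs_le.2 ⟨by linarith [ha.1], by linarith [ha.2]⟩
    have h2 : dist b x₀ ≤ δ := by
      rw [Real.dist_eq]; exact abs_le.2 ⟨by linarith [hb.1], by linarith [hb.2]⟩
    calc max (dist a t₀) (dist b x₀) ≤ δ := max_le h1 h2
    _ < ε := by rw [hδdef]; linarith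
  have ht₀K : t₀ ∈ Kt := ⟨by linarith, by linarith⟩
  have hx₀K : x₀ ∈ Kx := ⟨by linarith, by linarith⟩
  -- bound for the jets
  have hKcomp : IsCompact K := isCompact_Icc.prod isCompact_Icc
  obtain ⟨M₁, hM₁⟩ := hKcomp.exists_bound_of_continuousOn
    (((jet_contDiffOn hso hf).continuousOn).mono hKs)
  obtain ⟨M₂, hM₂⟩ := hKcomp.exists_bound_of_continuousOn
    (((jet_contDiffOn hso hf').continuousOn).mono hKs)
  set M : ℝ := max M₁ M₂ with hM_def
  have hMf : ∀ q ∈ K, ‖jet ρ f q‖ ≤ M := fun q hq => (hM₁ q hq).trans (le_max_left _ _)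
  have hMf' : ∀ q ∈ K, ‖jet ρ f' q‖ ≤ M := fun q hq => (hM₂ q hq).trans (le_max_right _ _)
  set D : Set (ℝ × ℝ × (Fin ρ → ℝ)) := Kt ×ˢ (Kx ×ˢ closedBall (0 : Fin ρ → ℝ) M)
    with hD_def
  have hDconv : Convex ℝ D :=
    (convex_Icc _ _).prod ((convex_Icc _ _).prod (convex_closedBall _ _))
  have hDcomp : IsCompact D :=
    isCompact_Icc.prod (isCompact_Icc.prod (isCompact_closedBall _ _))
  have hgD : ∀ q ∈ K, gmap ρ f q ∈ D := fun q hq =>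
    ⟨hq.1, hq.2, mem_closedBall_zero_iff.2 (hMf q hq)⟩
  have hgD' : ∀ q ∈ K, gmap ρ f' q ∈ D := fun q hq =>
    ⟨hq.1, hq.2, mem_closedBall_zero_iff.2 (hMf' q hq)⟩
  -- Lipschitz constants
  set Φ : ℝ × ℝ × (Fin ρ → ℝ) → (Fin ρ → ℝ) := fun p b => PF ρ η r H (b : ℕ) p with hΦ_def
  have hΦ : ContDiff ℝ ∞ Φ := contDiff_pi.2 fun b => PF_contDiff hηi hHi (b : ℕ)
  obtain ⟨L₁, hL₁⟩ := exists_lipschitzOnWith_of_contDiff hΦ hDconv hDcomp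
  obtain ⟨L₂, hL₂⟩ := exists_lipschitzOnWith_of_contDiff (shiftF_contDiff hηi) hDconv hDcomp
  have hdist : ∀ (a b : ℝ) (v w : Fin ρ → ℝ),
      dist ((a, b, v) : ℝ × ℝ × (Fin ρ → ℝ)) (a, b, w) = ‖v - w‖ := by
    intro a b v w
    rw [Prod.dist_eq, Prod.dist_eq, dist_self, dist_self, dist_eq_norm]
    rw [max_eq_right (norm_nonneg _), max_eq_right (norm_nonneg _)]
  -- the `x`-direction ODE at time `t₀`
  have happ1 : ∀ x ∈ Kx, jet ρ f (t₀, x) - jet ρ f' (t₀, x) = 0 := by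
    refine zero_on_Icc_two (C := L₂)
      (y' := fun x => shiftF ρ η (gmap ρ f (t₀, x)) - shiftF ρ η (gmap ρ f' (t₀, x)))
      hδ.le ?_ ?_ (sub_eq_zero_of_eq hjet0)
    · intro x hx
      have hqK : ((t₀, x) : ℝ × ℝ) ∈ K := ⟨ht₀K, hx⟩
      exact (jet_x_hasDerivAt hso hf hinv (hKs hqK)).sub
        (jet_x_hasDerivAt hso hf' hinv' (hKs hqK))
    · intro x hx
      have hqK : ((t₀, x) : ℝ × ℝ) ∈ K := ⟨ht₀K, hx⟩
      have h1 := hL₂.dist_le_mul _ (hgD _ hqK) _ (hgD' _ hqK)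
      rw [dist_eq_norm] at h1
      rw [show dist (gmap ρ f (t₀, x)) (gmap ρ f' (t₀, x))
          = ‖jet ρ f (t₀, x) - jet ρ f' (t₀, x)‖ from hdist t₀ x _ _] at h1
      exact h1
  -- the `t`-direction ODE at each `x`
  have happ2 : ∀ q ∈ K, jet ρ f q = jet ρ f' q := by
    rintro ⟨t, x⟩ ⟨htK, hxK⟩
    have key : ∀ τ ∈ Kt, jet ρ f (τ, x) - jet ρ f' (τ, x) = 0 := by
      refine zero_on_Icc_two (C := L₁)
        (y' := fun τ => Φ (gmap ρ f (τ, x)) - Φ (gmap ρ f' (τ, x)))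
        hδ.le ?_ ?_ (happ1 x hxK)
      · intro τ hτ
        have hqK : ((τ, x) : ℝ × ℝ) ∈ K := ⟨hτ, hxK⟩
        exact (jet_t_hasDerivAt hso hf hηi hHi hinv hρ0 hsol (hKs hqK)).sub
          (jet_t_hasDerivAt hso hf' hηi hHi hinv' hρ0 hsol' (hKs hqK))
      · intro τ hτ
        have hqK : ((τ, x) : ℝ × ℝ) ∈ K := ⟨hτ, hxK⟩
        have h1 := hL₁.dist_le_mul _ (hgD _ hqK) _ (hgD' _ hqK)
        rw [dist_eq_norm] at h1
        rw [show dist (gmap ρ f (τ, x)) (gmap ρ f' (τ, x))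
            = ‖jet ρ f (τ, x) - jet ρ f' (τ, x)‖ from hdist τ x _ _] at h1
        exact h1
    exact sub_eq_zero.1 (key t htK)
  -- conclusion
  refine ⟨Ioo (t₀ - δ) (t₀ + δ) ×ˢ Ioo (x₀ - δ) (x₀ + δ),
    isOpen_Ioo.prod isOpen_Ioo,
    ⟨⟨by linarith, by linarith⟩, ⟨by linarith, by linarith⟩⟩, ?_, ?_⟩
  · intro q hq
    exact hKs ⟨Ioo_subset_Icc_self hq.1, Ioo_subset_Icc_self hq.2⟩
  · intro q hq
    have hqK : q ∈ K := ⟨Ioo_subset_Icc_self hq.1, Ioo_subset_Icc_self hq.2⟩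
    exact congrFun (happ2 q hqK) ⟨0, hρ0⟩
end
end

section
/- Let f = f(t,x,κ) be a ρ-parametric family of solutions of E on I × J × V, i.e., f is smooth, each f(·,·,κ) solves E on I × J, and the Jacobian determinant det(∂(f, ∂ₓf, …, ∂ₓ^{ρ−1}f)/∂(κ₁,…,κ_ρ)) is nonzero everywhere on I × J × V. Let φ : I → V be differentiable and set u(t,x) := f(t, x, φ(t)). Then u solves E on I × J if and only if φ is constant. (Thus the ansatz u = f(t,x,φ(t)) reduces the equation E to the system φᵃ' = 0, a = 1, …, ρ.) -/
noncomputable section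

/-- The Jacobian-type matrix with entries `∂_{κ_b} ∂ₓ^{a-1} f` (indices `a, b = 1, …, ρ`),
evaluated at `p = (t, x, κ)`. -/
def famJac (ρ : ℕ) (f : ℝ × ℝ × (Fin ρ → ℝ) → ℝ) (p : ℝ × ℝ × (Fin ρ → ℝ)) :
    Matrix (Fin ρ) (Fin ρ) ℝ :=
  Matrix.of fun a b =>
    deriv (fun s => deriv^[(a : ℕ)] (fun y => f (p.1, y, Function.update p.2.2 b s)) p.2.1)
      (p.2.2 b)

namespace AnsatzAux

open Set Function Filter Topology

variable {E : Type*} [NormedAddCommGroup E] [NormedSpace ℝ E]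

/-- directional derivative operator -/
def dop (v : E) (g : E → ℝ) : E → ℝ := fun p => fderiv ℝ g p v

theorem contDiffOn_dop {U : Set E} (hU : IsOpen U) {g : E → ℝ}
    (hg : ContDiffOn ℝ (⊤ : ℕ∞) g U) (v : E) : ContDiffOn ℝ (⊤ : ℕ∞) (dop v g) U :=
  (hg.fderiv_of_isOpen hU (by simp)).clm_apply contDiffOn_const

theorem contDiffOn_dop_iterate {U : Set E} (hU : IsOpen U) {g : E → ℝ}
    (hg : ContDiffOn ℝ (⊤ : ℕ∞) g U) (v : E) (a : ℕ) : ContDiffOn ℝ (⊤ : ℕ∞) ((dop v)^[a] g) U := by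
  induction a with
  | zero => exact hg
  | succ a ih => rw [Function.iterate_succ_apply']; exact contDiffOn_dop hU ih v

theorem dop_comm {U : Set E} (hU : IsOpen U) {g : E → ℝ}
    (hg : ContDiffOn ℝ (⊤ : ℕ∞) g U) (v w : E) {p : E} (hp : p ∈ U) :
    dop v (dop w g) p = dop w (dop v g) p := by
  have hg' : ContDiffOn ℝ (⊤ : ℕ∞) (fderiv ℝ g) U := hg.fderiv_of_isOpen hU (by simp)
  have hf'' : HasFDerivAt (fderiv ℝ g) (fderiv ℝ (fderiv ℝ g) p) p :=
    ((hg'.contDiffAt (hU.mem_nhds hp)).differentiableAt (by simp)).hasFDerivAt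
  have hev : ∀ᶠ y in 𝓝 p, HasFDerivAt g (fderiv ℝ g y) y := by
    filter_upwards [hU.mem_nhds hp] with y hy using
      ((hg.contDiffAt (hU.mem_nhds hy)).differentiableAt (by simp)).hasFDerivAt
  have hsymm := second_derivative_symmetric_of_eventually hev hf'' v w
  have hcw : HasFDerivAt (dop w g)
      ((ContinuousLinearMap.apply ℝ ℝ w).comp (fderiv ℝ (fderiv ℝ g) p)) p :=
    (ContinuousLinearMap.apply ℝ ℝ w).hasFDerivAt.comp p hf''
  have hcv : HasFDerivAt (dop v g)
      ((ContinuousLinearMap.apply ℝ ℝ v).comp (fderiv ℝ (fderiv ℝ g) p)) p :=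
    (ContinuousLinearMap.apply ℝ ℝ v).hasFDerivAt.comp p hf''
  show fderiv ℝ (dop w g) p v = fderiv ℝ (dop v g) p w
  rw [hcw.fderiv, hcv.fderiv]
  exact hsymm

theorem dop_comm_iterate {U : Set E} (hU : IsOpen U) {g : E → ℝ}
    (hg : ContDiffOn ℝ (⊤ : ℕ∞) g U) (v w : E) (a : ℕ) :
    ∀ p ∈ U, (dop v)^[a] (dop w g) p = dop w ((dop v)^[a] g) p := by
  induction a with
  | zero => intro p _; rfl
  | succ a ih =>
    intro p hp
    rw [Function.iterate_succ_apply']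
    have h1 : fderiv ℝ ((dop v)^[a] (dop w g)) p = fderiv ℝ (dop w ((dop v)^[a] g)) p := by
      apply Filter.EventuallyEq.fderiv_eq
      filter_upwards [hU.mem_nhds hp] with y hy using ih y hy
    have h2 : dop v ((dop v)^[a] (dop w g)) p = dop v (dop w ((dop v)^[a] g)) p := by
      simp only [dop, h1]
    rw [h2, dop_comm hU (contDiffOn_dop_iterate hU hg v a) v w hp,
      ← Function.iterate_succ_apply' (dop v) a g]

variable {ρ : ℕ}

abbrev P (ρ : ℕ) := ℝ × ℝ × (Fin ρ → ℝ)

/-- unit vector in the x-direction -/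
def ex (ρ : ℕ) : P ρ := (0, 1, 0)

theorem deriv_slice_x {f : P ρ → ℝ} {p : P ρ} (hf : DifferentiableAt ℝ f p) :
    deriv (fun y => f (p.1, y, p.2.2)) p.2.1 = fderiv ℝ f p (ex ρ) := by
  have h1 : HasDerivAt (fun y : ℝ => (p.1, y, p.2.2)) (ex ρ) p.2.1 :=
    (hasDerivAt_const _ _).prodMk ((hasDerivAt_id _).prodMk (hasDerivAt_const _ _))
  exact (hf.hasFDerivAt.comp_hasDerivAt _ h1).deriv

theorem deriv_slice_t {f : P ρ → ℝ} {p : P ρ} (hf : DifferentiableAt ℝ f p) :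
    deriv (fun t => f (t, p.2.1, p.2.2)) p.1 = fderiv ℝ f p ((1:ℝ), (0:ℝ), (0 : Fin ρ → ℝ)) := by
  have h1 : HasDerivAt (fun t : ℝ => (t, p.2.1, p.2.2)) ((1:ℝ), (0:ℝ), (0 : Fin ρ → ℝ)) p.1 :=
    (hasDerivAt_id _).prodMk ((hasDerivAt_const _ _).prodMk (hasDerivAt_const _ _))
  exact (hf.hasFDerivAt.comp_hasDerivAt _ h1).deriv

theorem hasDerivAt_update (κ : Fin ρ → ℝ) (b : Fin ρ) (s₀ : ℝ) :
    HasDerivAt (fun s : ℝ => Function.update κ b s) (Pi.single b (1:ℝ)) s₀ := by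
  have heq : (fun s : ℝ => Function.update κ b s)
      = fun s => κ + (s - κ b) • (Pi.single b 1 : Fin ρ → ℝ) := by
    funext s; funext j
    by_cases h : j = b
    · subst h; simp
    · simp [Function.update, h, Pi.single_eq_of_ne h]
  rw [heq]
  have h := (((hasDerivAt_id s₀).sub_const (κ b)).smul_const
    ((Pi.single b 1 : Fin ρ → ℝ))).const_add κ
  simpa using h

theorem deriv_slice_param {f : P ρ → ℝ} {p : P ρ} (hf : DifferentiableAt ℝ f p) (b : Fin ρ) :
    deriv (fun s => f (p.1, p.2.1, Function.update p.2.2 b s)) (p.2.2 b)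
      = fderiv ℝ f p ((0:ℝ), (0:ℝ), Pi.single b 1) := by
  have hcurve : HasDerivAt (fun s : ℝ => (p.1, p.2.1, Function.update p.2.2 b s))
      ((0:ℝ), (0:ℝ), Pi.single b (1:ℝ)) (p.2.2 b) :=
    (hasDerivAt_const _ _).prodMk ((hasDerivAt_const _ _).prodMk (hasDerivAt_update p.2.2 b (p.2.2 b)))
  have hpt : (p.1, p.2.1, Function.update p.2.2 b (p.2.2 b)) = p := by simp
  have hf' : HasFDerivAt f (fderiv ℝ f p) (p.1, p.2.1, Function.update p.2.2 b (p.2.2 b)) := by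
    rw [hpt]; exact hf.hasFDerivAt
  exact (hf'.comp_hasDerivAt _ hcurve).deriv

/-- translation: iterated one-dimensional x-derivatives equal iterated `dop (ex ρ)`. -/
theorem iter_deriv_slice {U : Set (P ρ)} (hU : IsOpen U) {g : P ρ → ℝ}
    (hg : ContDiffOn ℝ (⊤ : ℕ∞) g U) (a : ℕ) :
    ∀ p ∈ U, deriv^[a] (fun y => g (p.1, y, p.2.2)) p.2.1 = (dop (ex ρ))^[a] g p := by
  induction a with
  | zero => intro p _; rfl
  | succ a ih =>
    intro p hp
    rw [Function.iterate_succ_apply']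
    have hopen : IsOpen {y : ℝ | (p.1, y, p.2.2) ∈ U} := hU.preimage (by fun_prop)
    have hev : (deriv^[a] (fun y => g (p.1, y, p.2.2))) =ᶠ[𝓝 p.2.1]
        (fun y => (dop (ex ρ))^[a] g (p.1, y, p.2.2)) := by
      filter_upwards [hopen.mem_nhds hp] with y hy using ih (p.1, y, p.2.2) hy
    rw [hev.deriv_eq, Function.iterate_succ_apply']
    exact deriv_slice_x
      (((contDiffOn_dop_iterate hU hg (ex ρ) a).contDiffAt (hU.mem_nhds hp)).differentiableAt
        (by simp))

theorem iter_deriv_zero (a : ℕ) : deriv^[a] (fun _ : ℝ => (0:ℝ)) = fun _ => 0 := by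
  induction a with
  | zero => rfl
  | succ a ih => rw [Function.iterate_succ_apply', ih]; funext x; exact deriv_const _ _

theorem iter_deriv_congr {s : Set ℝ} (hs : IsOpen s) {h h' : ℝ → ℝ}
    (hh : ∀ y ∈ s, h y = h' y) (a : ℕ) : ∀ x ∈ s, deriv^[a] h x = deriv^[a] h' x := by
  induction a with
  | zero => exact hh
  | succ a ih =>
    intro x hx
    rw [Function.iterate_succ_apply', Function.iterate_succ_apply']
    exact Filter.EventuallyEq.deriv_eq (by filter_upwards [hs.mem_nhds hx] with y hy using ih y hy)

end AnsatzAux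

open Set Function Filter Topology AnsatzAux

/-- if `f` is a `ρ`-parametric family of solutions of `E` (smooth with
everywhere nonvanishing Jacobian determinant) and `φ : I → V` is differentiable, then
`u(t,x) = f(t, x, φ(t))` solves `E` on `I × J` iff `φ` is constant; i.e. the ansatz
`u = f(t, x, φ(t))` reduces `E` to the system `φᵃ' = 0`. -/
theorem ansatz_from_family_reduces_to_trivial_system
    (ρ r : ℕ) (hρ : 1 ≤ ρ) (hr : 1 ≤ r)
    (H : ℝ × ℝ × (Fin (r + 1) → ℝ) → ℝ) (hH : ContDiff ℝ (⊤ : ℕ∞) H)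
    (I J : Set ℝ) (V : Set (Fin ρ → ℝ))
    (hI : IsOpen I) (hIc : I.OrdConnected) (hJ : IsOpen J) (hJc : J.OrdConnected)
    (hJne : J.Nonempty) (hV : IsOpen V)
    (f : ℝ × ℝ × (Fin ρ → ℝ) → ℝ) (hf : ContDiffOn ℝ (⊤ : ℕ∞) f (I ×ˢ J ×ˢ V))
    (hsol : ∀ κ ∈ V, SolvesE r H (fun t x => f (t, x, κ)) (I ×ˢ J))
    (hjac : ∀ p ∈ I ×ˢ J ×ˢ V, (famJac ρ f p).det ≠ 0)
    (φ : ℝ → Fin ρ → ℝ) (hφ : ∀ t ∈ I, DifferentiableAt ℝ φ t)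
    (hφV : ∀ t ∈ I, φ t ∈ V) :
    SolvesE r H (fun t x => f (t, x, φ t)) (I ×ˢ J) ↔
      ∀ t₁ ∈ I, ∀ t₂ ∈ I, φ t₁ = φ t₂ := by
  classical
  have hU : IsOpen (I ×ˢ J ×ˢ V) := hI.prod (hJ.prod hV)
  constructor
  · intro hsolu
    -- derivative of φ vanishes on I
    have key : ∀ t ∈ I, HasDerivAt φ 0 t := by
      intro t ht
      have hder : HasDerivAt φ (deriv φ t) t := (hφ t ht).hasDerivAt
      have hκV : φ t ∈ V := hφV t ht
      set c : Fin ρ → ℝ := deriv φ t with hc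
      -- Step A: ∂_{(0,0,c)} f (t, x, φ t) = 0 for all x ∈ J
      have stepA : ∀ x ∈ J, dop ((0:ℝ), (0:ℝ), c) f (t, x, φ t) = 0 := by
        intro x hx
        have hpU : ((t, x, φ t) : P ρ) ∈ I ×ˢ J ×ˢ V := ⟨ht, hx, hκV⟩
        have hfd : DifferentiableAt ℝ f (t, x, φ t) :=
          ((hf.contDiffAt (hU.mem_nhds hpU)).differentiableAt (by simp))
        have hcurve : HasDerivAt (fun τ : ℝ => ((τ, x, φ τ) : P ρ)) ((1:ℝ), (0:ℝ), c) t :=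
          (hasDerivAt_id _).prodMk ((hasDerivAt_const _ _).prodMk hder)
        have h1 : deriv (fun τ => f (τ, x, φ τ)) t
            = fderiv ℝ f (t, x, φ t) ((1:ℝ), (0:ℝ), c) :=
          (hfd.hasFDerivAt.comp_hasDerivAt _ hcurve).deriv
        have h2 : deriv (fun τ => f (τ, x, φ t)) t
            = fderiv ℝ f (t, x, φ t) ((1:ℝ), (0:ℝ), (0 : Fin ρ → ℝ)) :=
          deriv_slice_t hfd
        have e1 : deriv (fun τ => f (τ, x, φ τ)) t
            = H (t, x, fun i => deriv^[(i : ℕ)] (fun y => f (t, y, φ t)) x) :=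
          hsolu (t, x) ⟨ht, hx⟩
        have e2 : deriv (fun τ => f (τ, x, φ t)) t
            = H (t, x, fun i => deriv^[(i : ℕ)] (fun y => f (t, y, φ t)) x) :=
          hsol (φ t) hκV (t, x) ⟨ht, hx⟩
        have h3 : fderiv ℝ f (t, x, φ t) ((1:ℝ), (0:ℝ), c)
            = fderiv ℝ f (t, x, φ t) ((1:ℝ), (0:ℝ), (0 : Fin ρ → ℝ)) := by
          rw [← h1, ← h2, e1, e2]
        have hvec : ((1:ℝ), (0:ℝ), c) - ((1:ℝ), (0:ℝ), (0 : Fin ρ → ℝ))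
            = (((0:ℝ), (0:ℝ), c) : P ρ) := by
          simp [Prod.ext_iff]
        show fderiv ℝ f (t, x, φ t) ((0:ℝ), (0:ℝ), c) = 0
        rw [← hvec, map_sub, h3, sub_self]
      -- Step B: all x-derivatives of the above identity
      have hgsmooth : ContDiffOn ℝ (⊤ : ℕ∞) (dop (((0:ℝ), (0:ℝ), c) : P ρ) f) (I ×ˢ J ×ˢ V) :=
        contDiffOn_dop hU hf _
      have hzero : ∀ (a : ℕ), ∀ x ∈ J,
          (dop (ex ρ))^[a] (dop (((0:ℝ), (0:ℝ), c) : P ρ) f) (t, x, φ t) = 0 := by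
        intro a x hx
        have hpU : ((t, x, φ t) : P ρ) ∈ I ×ˢ J ×ˢ V := ⟨ht, hx, hκV⟩
        rw [← iter_deriv_slice hU hgsmooth a (t, x, φ t) hpU]
        have hcongr := iter_deriv_congr hJ
          (h := fun y => dop (((0:ℝ), (0:ℝ), c) : P ρ) f (t, y, φ t)) (h' := fun _ => (0:ℝ))
          (fun y hy => stepA y hy) a x hx
        rw [hcongr, iter_deriv_zero]
      -- Jacobian relation
      obtain ⟨x, hx⟩ := hJne
      have hpU : ((t, x, φ t) : P ρ) ∈ I ×ˢ J ×ˢ V := ⟨ht, hx, hκV⟩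
      have hrow : ∀ (a b : Fin ρ), famJac ρ f (t, x, φ t) a b
          = fderiv ℝ ((dop (ex ρ))^[(a : ℕ)] f) (t, x, φ t)
              ((0:ℝ), (0:ℝ), Pi.single b 1) := by
        intro a b
        have hopen : IsOpen {s : ℝ | ((t, x, Function.update (φ t) b s) : P ρ) ∈ I ×ˢ J ×ˢ V} :=
          hU.preimage (by fun_prop)
        have hmem : φ t b ∈ {s : ℝ | ((t, x, Function.update (φ t) b s) : P ρ) ∈ I ×ˢ J ×ˢ V} := by
          simp only [Set.mem_setOf_eq, Function.update_eq_self]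
          exact hpU
        have hev : (fun s => deriv^[(a : ℕ)] (fun y => f (t, y, Function.update (φ t) b s)) x)
            =ᶠ[𝓝 (φ t b)]
            (fun s => (dop (ex ρ))^[(a : ℕ)] f (t, x, Function.update (φ t) b s)) := by
          filter_upwards [hopen.mem_nhds hmem] with s hs using
            iter_deriv_slice hU hf (a : ℕ) (t, x, Function.update (φ t) b s) hs
        have hdiff : DifferentiableAt ℝ ((dop (ex ρ))^[(a : ℕ)] f) (t, x, φ t) :=
          (((contDiffOn_dop_iterate hU hf (ex ρ) (a : ℕ)).contDiffAt
            (hU.mem_nhds hpU)).differentiableAt (by simp))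
        show deriv (fun s => deriv^[(a : ℕ)] (fun y => f (t, y, Function.update (φ t) b s)) x)
            (φ t b) = _
        rw [hev.deriv_eq]
        exact deriv_slice_param hdiff b
      have hmul : (famJac ρ f (t, x, φ t)).mulVec c = 0 := by
        funext a
        show ∑ b, famJac ρ f (t, x, φ t) a b * c b = 0
        have hsum : ∑ b, famJac ρ f (t, x, φ t) a b * c b
            = fderiv ℝ ((dop (ex ρ))^[(a : ℕ)] f) (t, x, φ t) ((0:ℝ), (0:ℝ), c) := by
          have hv : (∑ b, c b • (((0:ℝ), (0:ℝ), Pi.single b 1) : P ρ))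
              = (((0:ℝ), (0:ℝ), c) : P ρ) := by
            rw [Prod.ext_iff]
            constructor
            · simp [Prod.fst_sum]
            rw [Prod.ext_iff]
            constructor
            · simp [Prod.fst_sum, Prod.snd_sum]
            · show (∑ b, c b • (((0:ℝ), (0:ℝ), Pi.single b 1) : P ρ)).2.2 = c
              rw [Prod.snd_sum, Prod.snd_sum]
              have : ∀ b : Fin ρ, c b • ((Pi.single b 1 : Fin ρ → ℝ)) = Pi.single b (c b) := by
                intro b; funext j; by_cases h : j = b
                · subst h; simp
                · simp [Pi.single_eq_of_ne h]
              calc ∑ b, (c b • (((0:ℝ), (0:ℝ), Pi.single b 1) : P ρ)).2.2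
                  = ∑ b, Pi.single b (c b) := by
                    refine Finset.sum_congr rfl fun b _ => ?_
                    show c b • ((Pi.single b 1 : Fin ρ → ℝ)) = _
                    exact this b
                _ = c := Finset.univ_sum_single c
          calc ∑ b, famJac ρ f (t, x, φ t) a b * c b
              = ∑ b, fderiv ℝ ((dop (ex ρ))^[(a : ℕ)] f) (t, x, φ t)
                  (c b • (((0:ℝ), (0:ℝ), Pi.single b 1) : P ρ)) := by
                refine Finset.sum_congr rfl fun b _ => ?_
                rw [hrow a b, map_smul, smul_eq_mul, mul_comm]
            _ = fderiv ℝ ((dop (ex ρ))^[(a : ℕ)] f) (t, x, φ t)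
                  (∑ b, c b • (((0:ℝ), (0:ℝ), Pi.single b 1) : P ρ)) := (map_sum _ _ _).symm
            _ = _ := by rw [hv]
        rw [hsum]
        have := dop_comm_iterate hU hf (ex ρ) (((0:ℝ), (0:ℝ), c) : P ρ) (a : ℕ)
          (t, x, φ t) hpU
        calc fderiv ℝ ((dop (ex ρ))^[(a : ℕ)] f) (t, x, φ t) ((0:ℝ), (0:ℝ), c)
            = dop (((0:ℝ), (0:ℝ), c) : P ρ) ((dop (ex ρ))^[(a : ℕ)] f) (t, x, φ t) := rfl
          _ = (dop (ex ρ))^[(a : ℕ)] (dop (((0:ℝ), (0:ℝ), c) : P ρ) f) (t, x, φ t) := this.symm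
          _ = 0 := hzero (a : ℕ) x hx
      have hc0 : c = 0 := Matrix.eq_zero_of_mulVec_eq_zero (hjac (t, x, φ t) hpU) hmul
      rw [hc] at hc0
      rw [← hc0]
      exact hder
    -- conclude: φ is constant on the convex set I
    intro t₁ ht₁ t₂ ht₂
    have hconv : Convex ℝ I := convex_iff_ordConnected.2 hIc
    have hbound := hconv.norm_image_sub_le_of_norm_hasFDerivWithin_le (C := 0)
      (f' := fun _ : ℝ => (0 : ℝ →L[ℝ] (Fin ρ → ℝ)))
      (fun τ hτ => by
        have h0 : (ContinuousLinearMap.smulRight (1 : ℝ →L[ℝ] ℝ) (0 : Fin ρ → ℝ))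
            = (0 : ℝ →L[ℝ] (Fin ρ → ℝ)) := by ext z; simp
        exact (h0 ▸ (key τ hτ).hasFDerivAt : HasFDerivAt φ 0 τ).hasFDerivWithinAt)
      (fun τ _ => by simp) ht₂ ht₁
    have : ‖φ t₁ - φ t₂‖ ≤ 0 := by simpa using hbound
    have := le_antisymm this (norm_nonneg _)
    rwa [norm_eq_zero, sub_eq_zero] at this
  · intro hconst q hq
    have hκ : φ q.1 ∈ V := hφV q.1 hq.1
    have hev : (fun τ => f (τ, q.2, φ τ)) =ᶠ[𝓝 q.1] (fun τ => f (τ, q.2, φ q.1)) := by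
      filter_upwards [hI.mem_nhds hq.1] with τ hτ
      rw [hconst τ hτ q.1 hq.1]
    show deriv (fun τ => f (τ, q.2, φ τ)) q.1 = _
    rw [hev.deriv_eq]
    exact hsol (φ q.1) hκ q hq
end
end
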